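/- Suppose in addition that there are real numbers s and t with t > 0 such that s_i = s and t_i = t for all i ≥ 1. Then for every integer n ≥ 1 and every real α, with x = (α+s)/(2√t), one has f_n(α) = (√t)^n·U_n(x) − (s − s_0)·(√t)^{n−1}·U_{n−1}(x) + (t − t_0)·(√t)^{n−2}·U_{n−2}(x), where for n = 1 the last term is interpreted as 0 (since U_{−1} = 0). -/

import Mathlib

/-- The polynomials `f_n(α)`: `f_0 = 1`, `f_1 = α + s_0`, and
`f_n(α) = (α + s_{n-1}) f_{n-1}(α) - t_{n-2} f_{n-2}(α)` for `n ≥ 2`. -/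
def fpoly (s t : ℕ → ℝ) (α : ℝ) : ℕ → ℝ
  | 0 => 1
  | 1 => α + s 0
  | n+2 => (α + s (n+1)) * fpoly s t α (n+1) - t n * fpoly s t α n

/-- The Chebyshev polynomial of the second kind, evaluated at a real argument
(`ℤ`-indexed; in particular `chebU (-1) x = 0`). -/
noncomputable def chebU (k : ℤ) (x : ℝ) : ℝ := (Polynomial.Chebyshev.U ℝ k).eval x

/-!
For `n ≥ 1` the recurrence of `f_n` has constant coefficients `α + s` and `t`. Rescaled, the
Chebyshev recurrence says that `g_k = (√t)^k U_k(x)` satisfies the same recurrence for every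
integer `k`, hence so does any fixed linear combination of `g_n, g_{n-1}, g_{n-2}`. The right-hand
side is such a combination, and it agrees with `f_n` at `n = 1, 2`.
-/

theorem eq_of_linear_recurrence_of_eq_one_two {R : Type*} [Ring R] {u v : ℕ → R} {a b : R}
    (hu : ∀ n, 1 ≤ n → u (n + 2) = a * u (n + 1) - b * u n)
    (hv : ∀ n, 1 ≤ n → v (n + 2) = a * v (n + 1) - b * v n)
    (h₁ : u 1 = v 1) (h₂ : u 2 = v 2) {n : ℕ} (hn : 1 ≤ n) : u n = v n := by
  suffices h : ∀ m, u (m + 1) = v (m + 1) ∧ u (m + 2) = v (m + 2) by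
    obtain ⟨m, rfl⟩ := Nat.exists_eq_add_of_le' hn
    exact (h m).1
  intro m
  induction m with
  | zero => exact ⟨h₁, h₂⟩
  | succ m ih =>
    refine ⟨ih.2, ?_⟩
    rw [hu (m + 1) (by omega), hv (m + 1) (by omega), ih.1, ih.2]

theorem chebU_add_two (k : ℤ) (x : ℝ) :
    chebU (k + 2) x = 2 * x * chebU (k + 1) x - chebU k x := by
  simp [chebU, Polynomial.Chebyshev.U_add_two]

theorem zpow_mul_chebU_add_two {r : ℝ} (hr : r ≠ 0) (x : ℝ) (k : ℤ) :
    r ^ (k + 2) * chebU (k + 2) x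
      = 2 * x * r * (r ^ (k + 1) * chebU (k + 1) x) - r ^ 2 * (r ^ k * chebU k x) := by
  rw [chebU_add_two, zpow_add₀ hr, zpow_add₀ hr]
  simp only [zpow_ofNat]
  ring

theorem fpoly_add_two_of_const {s t : ℕ → ℝ} {sc tc : ℝ}
    (hs : ∀ i, 1 ≤ i → s i = sc) (htt : ∀ i, 1 ≤ i → t i = tc) (α : ℝ) (n : ℕ) (hn : 1 ≤ n) :
    fpoly s t α (n + 2) = (α + sc) * fpoly s t α (n + 1) - tc * fpoly s t α n := by
  rw [fpoly, hs (n + 1) (by omega), htt n hn]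

theorem fpoly_eq_chebyshev_general (s t : ℕ → ℝ)
    (sc tc : ℝ) (htc : 0 < tc)
    (hs : ∀ i, 1 ≤ i → s i = sc) (htt : ∀ i, 1 ≤ i → t i = tc)
    (n : ℕ) (hn : 1 ≤ n) (α : ℝ) :
    fpoly s t α n
      = Real.sqrt tc ^ (n : ℤ) * chebU (n : ℤ) ((α + sc) / (2 * Real.sqrt tc))
          - (sc - s 0) * Real.sqrt tc ^ ((n : ℤ) - 1)
              * chebU ((n : ℤ) - 1) ((α + sc) / (2 * Real.sqrt tc))
          + (tc - t 0) * Real.sqrt tc ^ ((n : ℤ) - 2)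
              * chebU ((n : ℤ) - 2) ((α + sc) / (2 * Real.sqrt tc)) := by
  set r := Real.sqrt tc
  set x := (α + sc) / (2 * r)
  have hr : r ≠ 0 := (Real.sqrt_pos.mpr htc).ne'
  have hr2 : r ^ 2 = tc := Real.sq_sqrt htc.le
  have hx : 2 * x * r = α + sc := by simp only [x]; field_simp
  clear_value r x
  have hg (k : ℤ) : r ^ (k + 2) * chebU (k + 2) x
      = (α + sc) * (r ^ (k + 1) * chebU (k + 1) x) - tc * (r ^ k * chebU k x) :=
    hx ▸ hr2 ▸ zpow_mul_chebU_add_two hr x k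
  refine eq_of_linear_recurrence_of_eq_one_two (fpoly_add_two_of_const hs htt α)
    (v := fun m : ℕ => r ^ (m : ℤ) * chebU m x - (sc - s 0) * r ^ ((m : ℤ) - 1) * chebU (m - 1) x
      + (tc - t 0) * r ^ ((m : ℤ) - 2) * chebU (m - 2) x) ?_ ?_ ?_ hn
  · intro m _
    have h₀ := hg m
    have h₁ := hg (m - 1)
    have h₂ := hg (m - 2)
    push_cast
    ring_nf at h₀ h₁ h₂ ⊢
    linear_combination h₀ - (sc - s 0) * h₁ + (tc - t 0) * h₂
  · norm_num [fpoly, chebU]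
    linear_combination -hx
  · norm_num [fpoly, chebU, Polynomial.Chebyshev.U_two, hs 1 le_rfl]
    linear_combination -(α + s 0 + 2 * x * r) * hx + hr2

/-- Eq. (4.2): if `s_i = s` and `t_i = t` for `i ≥ 1` with `t > 0`, then for `n ≥ 1`
and real `α`, with `x = (α+s)/(2√t)`,
`f_n(α) = (√t)^n U_n(x) - (s-s_0)(√t)^{n-1} U_{n-1}(x) + (t-t_0)(√t)^{n-2} U_{n-2}(x)`. -/
theorem fpoly_eq_chebyshev (s t : ℕ → ℝ) (ht : ∀ n, t n ≠ 0)
    (sc tc : ℝ) (htc : 0 < tc)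
    (hs : ∀ i, 1 ≤ i → s i = sc) (htt : ∀ i, 1 ≤ i → t i = tc)
    (n : ℕ) (hn : 1 ≤ n) (α : ℝ) :
    fpoly s t α n
      = Real.sqrt tc ^ (n : ℤ) * chebU (n : ℤ) ((α + sc) / (2 * Real.sqrt tc))
          - (sc - s 0) * Real.sqrt tc ^ ((n : ℤ) - 1)
              * chebU ((n : ℤ) - 1) ((α + sc) / (2 * Real.sqrt tc))
          + (tc - t 0) * Real.sqrt tc ^ ((n : ℤ) - 2)
              * chebU ((n : ℤ) - 2) ((α + sc) / (2 * Real.sqrt tc)) :=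
  fpoly_eq_chebyshev_general s t sc tc htc hs htt n hn α
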